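/- Let 1 < p < ∞, let (G, H, Γ) be a uniform cut-and-project scheme with H almost connected, let W ⊆ H be a regular symmetric window containing 1, and let Λ = Λ(G,H,Γ,W) be the associated regular symmetric uniform model set. Let Δ ⊆ Λ be a symmetric subset containing 1 which is relatively dense in G, and let Λ^∞ and Δ^∞ be the subgroups of G generated by Λ and Δ respectively. If every L^p-cocycle (π, b) on Λ^∞ has b bounded on Λ, then every L^p-cocycle (π, b) on Δ^∞ has b bounded on Δ. -/

import Mathlib

/-- A packaged locally compact second countable Hausdorff topological group,
equipped with its Borel structure. -/
structure LCSCGroupPack where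
  carrier : Type
  [grp : Group carrier]
  [top : TopologicalSpace carrier]
  [tgrp : IsTopologicalGroup carrier]
  [t2 : T2Space carrier]
  [lc : LocallyCompactSpace carrier]
  [sc : SecondCountableTopology carrier]
  [mb : MeasurableSpace carrier]
  [bs : BorelSpace carrier]

attribute [instance] LCSCGroupPack.grp LCSCGroupPack.top LCSCGroupPack.tgrp LCSCGroupPack.t2
  LCSCGroupPack.lc LCSCGroupPack.sc LCSCGroupPack.mb LCSCGroupPack.bs

open MeasureTheory Set
open scoped Pointwise ENNReal

/-- A subset of a topological group is relatively dense if finitely many "translates"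
by a compact set cover the group: `A * K = G` for some compact `K`. -/
def RelativelyDense {G : Type*} [Group G] [TopologicalSpace G] (A : Set G) : Prop :=
  ∃ K : Set G, IsCompact K ∧ A * K = Set.univ

/-- A uniform lattice: a discrete, cocompact subgroup. -/
def IsUniformLattice {G : Type*} [Group G] [TopologicalSpace G] (Γ : Subgroup G) : Prop :=
  DiscreteTopology Γ ∧ RelativelyDense (Γ : Set G)

/-- A uniform cut-and-project scheme: `Γ ≤ G × H` is a uniform lattice projecting
injectively to `G` and densely to `H`. -/
structure IsCutAndProject {G H : Type*} [Group G] [TopologicalSpace G] [Group H]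
    [TopologicalSpace H] (Γ : Subgroup (G × H)) : Prop where
  lattice : IsUniformLattice Γ
  inj : ∀ x y : Γ, (x : G × H).1 = (y : G × H).1 → x = y
  dense_proj : Dense (Prod.snd '' (Γ : Set (G × H)))

/-- The model set `Λ(G,H,Γ,W) = π_G (Γ ∩ (G × W))`. -/
def modelSet {G H : Type*} [Group G] [TopologicalSpace G] [Group H] [TopologicalSpace H]
    (Γ : Subgroup (G × H)) (W : Set H) : Set G :=
  Prod.fst '' ((Γ : Set (G × H)) ∩ (Set.univ ×ˢ W))

/-- A regular symmetric window containing the identity: compact, symmetric, `1 ∈ W`,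
with dense interior, Haar-null boundary, boundary disjoint from `π_H(Γ)`, and aperiodic. -/
def IsRegularWindow {G : Type*} [Group G] [TopologicalSpace G] (H : Type*) [Group H]
    [TopologicalSpace H] [MeasurableSpace H] (Γ : Subgroup (G × H)) (W : Set H) : Prop :=
  IsCompact W ∧ W⁻¹ = W ∧ (1 : H) ∈ W ∧ W ⊆ closure (interior W) ∧
  (∀ μH : Measure H, μH.IsHaarMeasure → μH (frontier W) = 0) ∧
  frontier W ∩ (Prod.snd '' (Γ : Set (G × H))) = ∅ ∧
  (∀ h : H, (fun w => h * w) '' W = W → h = 1)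

/-- `Λ` is a symmetric Meyer set containing the identity in `G`: a relatively dense
symmetric subset containing `1` of a regular symmetric uniform model set. -/
def IsSymmetricMeyer (G : Type) [Group G] [TopologicalSpace G] (Λ : Set G) : Prop :=
  Λ⁻¹ = Λ ∧ (1 : G) ∈ Λ ∧ RelativelyDense Λ ∧
  ∃ (H : LCSCGroupPack) (Γ : Subgroup (G × H.carrier)) (W : Set H.carrier),
    IsCutAndProject Γ ∧ IsRegularWindow H.carrier Γ W ∧ Λ ⊆ modelSet Γ W

/-- Every `L^p`-cocycle on the (abstract) group `Γ` is bounded on `A`. -/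
def BddLpCocyclesOn (p : ℝ≥0∞) (hp : 1 ≤ p) (Γ : Type*) [Group Γ] (A : Set Γ) : Prop :=
  haveI : Fact (1 ≤ p) := ⟨hp⟩
  ∀ (Y : Type) [MeasurableSpace Y] [StandardBorelSpace Y] (μ : Measure Y) [SigmaFinite μ]
    (π : Γ →* (Lp ℝ p μ ≃ₗᵢ[ℝ] Lp ℝ p μ)) (b : Γ → Lp ℝ p μ),
    (∀ g h : Γ, b (g * h) = b g + (π g) (b h)) →
    ∃ C : ℝ, ∀ x ∈ A, ‖b x‖ ≤ C

/-- Every weak `L^p`-quasi-cocycle on the (abstract) group `Γ` is bounded on `A`. -/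
def WqBddOn (p : ℝ≥0∞) (hp : 1 ≤ p) (Γ : Type*) [Group Γ] (A : Set Γ) : Prop :=
  haveI : Fact (1 ≤ p) := ⟨hp⟩
  ∀ (Y : Type) [MeasurableSpace Y] [StandardBorelSpace Y] (μ : Measure Y) [SigmaFinite μ]
    (π : Γ → (Lp ℝ p μ ≃ₗᵢ[ℝ] Lp ℝ p μ)) (b : Γ → Lp ℝ p μ),
    (∃ D : ℝ, ∀ g h : Γ, ‖b (g * h) - b g - (π g) (b h)‖ ≤ D) →
    ∃ C : ℝ, ∀ x ∈ A, ‖b x‖ ≤ C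

/-- Property (FL^p) for a topological group: every continuous `L^p`-cocycle is bounded. -/
def HasFLp (p : ℝ≥0∞) (hp : 1 ≤ p) (G : Type*) [Group G] [TopologicalSpace G] : Prop :=
  haveI : Fact (1 ≤ p) := ⟨hp⟩
  ∀ (Y : Type) [MeasurableSpace Y] [StandardBorelSpace Y] (μ : Measure Y) [SigmaFinite μ]
    (π : G →* (Lp ℝ p μ ≃ₗᵢ[ℝ] Lp ℝ p μ)) (b : G → Lp ℝ p μ),
    (∀ g h : G, b (g * h) = b g + (π g) (b h)) →
    Continuous b → (∀ v, Continuous fun g => (π g) v) →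
    ∃ C : ℝ, ∀ g : G, ‖b g‖ ≤ C

/-- Property (FFFL^p): every Borel weak `L^p`-quasi-cocycle is bounded. -/
def HasFFFLp (p : ℝ≥0∞) (hp : 1 ≤ p) (G : Type*) [Group G] [TopologicalSpace G]
    [MeasurableSpace G] : Prop :=
  haveI : Fact (1 ≤ p) := ⟨hp⟩
  ∀ (Y : Type) [MeasurableSpace Y] [StandardBorelSpace Y] (μ : Measure Y) [SigmaFinite μ]
    (π : G → (Lp ℝ p μ ≃ₗᵢ[ℝ] Lp ℝ p μ)) (b : G → Lp ℝ p μ),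
    (∃ D : ℝ, ∀ g h : G, ‖b (g * h) - b g - (π g) (b h)‖ ≤ D) →
    (∀ U : Set (Lp ℝ p μ), IsOpen U → MeasurableSet (b ⁻¹' U)) →
    (∀ (v : Lp ℝ p μ) (U : Set (Lp ℝ p μ)), IsOpen U →
      MeasurableSet ((fun g => (π g) v) ⁻¹' U)) →
    ∃ C : ℝ, ∀ g : G, ‖b g‖ ≤ C

/-- a-FL^p-menability of a topological group: there is a continuous `L^p`-cocycle
all of whose sublevel sets have compact closure. -/
def AFLpMenable (p : ℝ≥0∞) (hp : 1 ≤ p) (G : Type*) [Group G] [TopologicalSpace G] : Prop :=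
  haveI : Fact (1 ≤ p) := ⟨hp⟩
  ∃ (Y : Type) (mY : MeasurableSpace Y) (μ : @Measure Y mY),
    @StandardBorelSpace Y mY ∧ SigmaFinite μ ∧
    ∃ (π : G →* (Lp ℝ p μ ≃ₗᵢ[ℝ] Lp ℝ p μ)) (b : G → Lp ℝ p μ),
      (∀ g h : G, b (g * h) = b g + (π g) (b h)) ∧
      Continuous b ∧ (∀ v, Continuous fun g => (π g) v) ∧
      ∀ C : ℝ, IsCompact (closure {g : G | ‖b g‖ ≤ C})

/-- a-FFFL^p-menability of a topological group: there is a Borel weak `L^p`-quasi-cocycle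
all of whose sublevel sets have compact closure. -/
def AFFFLpMenable (p : ℝ≥0∞) (hp : 1 ≤ p) (G : Type*) [Group G] [TopologicalSpace G]
    [MeasurableSpace G] : Prop :=
  haveI : Fact (1 ≤ p) := ⟨hp⟩
  ∃ (Y : Type) (mY : MeasurableSpace Y) (μ : @Measure Y mY),
    @StandardBorelSpace Y mY ∧ SigmaFinite μ ∧
    ∃ (π : G → (Lp ℝ p μ ≃ₗᵢ[ℝ] Lp ℝ p μ)) (b : G → Lp ℝ p μ),
      (∃ D : ℝ, ∀ g h : G, ‖b (g * h) - b g - (π g) (b h)‖ ≤ D) ∧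
      (∀ U : Set (Lp ℝ p μ), IsOpen U → MeasurableSet (b ⁻¹' U)) ∧
      (∀ (v : Lp ℝ p μ) (U : Set (Lp ℝ p μ)), IsOpen U →
        MeasurableSet ((fun g => (π g) v) ⁻¹' U)) ∧
      ∀ C : ℝ, IsCompact (closure {g : G | ‖b g‖ ≤ C})

/-- There is an `L^p`-cocycle on the subgroup generated by `Λ` whose sublevel sets
along `Λ` have compact closure in `G`. -/
def ExistsLpCocycleProperOnSubset (p : ℝ≥0∞) (hp : 1 ≤ p) {G : Type*} [Group G]
    [TopologicalSpace G] (Λ : Set G) : Prop :=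
  haveI : Fact (1 ≤ p) := ⟨hp⟩
  ∃ (Y : Type) (mY : MeasurableSpace Y) (μ : @Measure Y mY),
    @StandardBorelSpace Y mY ∧ SigmaFinite μ ∧
    ∃ (π : ↥(Subgroup.closure Λ) →* (Lp ℝ p μ ≃ₗᵢ[ℝ] Lp ℝ p μ))
      (b : ↥(Subgroup.closure Λ) → Lp ℝ p μ),
      (∀ g h : ↥(Subgroup.closure Λ), b (g * h) = b g + (π g) (b h)) ∧
      ∀ C : ℝ, IsCompact (closure (Subtype.val ''
        {x : ↥(Subgroup.closure Λ) | (x : G) ∈ Λ ∧ ‖b x‖ ≤ C}))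

/-- There is a weak `L^p`-quasi-cocycle on the subgroup generated by `Λ` whose sublevel
sets along `Λ` have compact closure in `G`. -/
def ExistsWqCocycleProperOnSubset (p : ℝ≥0∞) (hp : 1 ≤ p) {G : Type*} [Group G]
    [TopologicalSpace G] (Λ : Set G) : Prop :=
  haveI : Fact (1 ≤ p) := ⟨hp⟩
  ∃ (Y : Type) (mY : MeasurableSpace Y) (μ : @Measure Y mY),
    @StandardBorelSpace Y mY ∧ SigmaFinite μ ∧
    ∃ (π : ↥(Subgroup.closure Λ) → (Lp ℝ p μ ≃ₗᵢ[ℝ] Lp ℝ p μ))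
      (b : ↥(Subgroup.closure Λ) → Lp ℝ p μ),
      (∃ D : ℝ, ∀ g h : ↥(Subgroup.closure Λ), ‖b (g * h) - b g - (π g) (b h)‖ ≤ D) ∧
      ∀ C : ℝ, IsCompact (closure (Subtype.val ''
        {x : ↥(Subgroup.closure Λ) | (x : G) ∈ Λ ∧ ‖b x‖ ≤ C}))

/-- There is an `L^p`-cocycle on `Δ` which is proper on `A` in the discrete sense:
all sublevel sets along `A` are finite. -/
def ExistsLpCocycleFinProperOn (p : ℝ≥0∞) (hp : 1 ≤ p) (Δ : Type*) [Group Δ]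
    (A : Set Δ) : Prop :=
  haveI : Fact (1 ≤ p) := ⟨hp⟩
  ∃ (Y : Type) (mY : MeasurableSpace Y) (μ : @Measure Y mY),
    @StandardBorelSpace Y mY ∧ SigmaFinite μ ∧
    ∃ (π : Δ →* (Lp ℝ p μ ≃ₗᵢ[ℝ] Lp ℝ p μ)) (b : Δ → Lp ℝ p μ),
      (∀ g h : Δ, b (g * h) = b g + (π g) (b h)) ∧
      ∀ C : ℝ, 0 < C → {x ∈ A | ‖b x‖ ≤ C}.Finite

/-- There is a weak `L^p`-quasi-cocycle on `Δ` which is proper on `A` in the discrete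
sense: all sublevel sets along `A` are finite. -/
def ExistsWqCocycleFinProperOn (p : ℝ≥0∞) (hp : 1 ≤ p) (Δ : Type*) [Group Δ]
    (A : Set Δ) : Prop :=
  haveI : Fact (1 ≤ p) := ⟨hp⟩
  ∃ (Y : Type) (mY : MeasurableSpace Y) (μ : @Measure Y mY),
    @StandardBorelSpace Y mY ∧ SigmaFinite μ ∧
    ∃ (π : Δ → (Lp ℝ p μ ≃ₗᵢ[ℝ] Lp ℝ p μ)) (b : Δ → Lp ℝ p μ),
      (∃ D : ℝ, ∀ g h : Δ, ‖b (g * h) - b g - (π g) (b h)‖ ≤ D) ∧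
      ∀ C : ℝ, 0 < C → {x ∈ A | ‖b x‖ ≤ C}.Finite

/-- Property (FFFFL^p): every 2-Freiman weak `L^p`-quasi-cocycle (defect bounded over
`Λ`) is bounded on `Λ`. -/
def Freiman2BddOn (p : ℝ≥0∞) (hp : 1 ≤ p) (Γ : Type*) [Group Γ] (Λ : Set Γ) : Prop :=
  haveI : Fact (1 ≤ p) := ⟨hp⟩
  ∀ (Y : Type) [MeasurableSpace Y] [StandardBorelSpace Y] (μ : Measure Y) [SigmaFinite μ]
    (π : Γ → (Lp ℝ p μ ≃ₗᵢ[ℝ] Lp ℝ p μ)) (b : Γ → Lp ℝ p μ),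
    (∃ D : ℝ, ∀ g ∈ Λ, ∀ h ∈ Λ, ‖b (g * h) - b g - (π g) (b h)‖ ≤ D) →
    ∃ C : ℝ, ∀ x ∈ Λ, ‖b x‖ ≤ C

/-- a-FFFFL^p-menability: there is a 2-Freiman weak `L^p`-quasi-cocycle (defect bounded
over `A`) which is proper on `A` in the discrete sense. -/
def Freiman2FinProperOn (p : ℝ≥0∞) (hp : 1 ≤ p) (Δ : Type*) [Group Δ] (A : Set Δ) : Prop :=
  haveI : Fact (1 ≤ p) := ⟨hp⟩
  ∃ (Y : Type) (mY : MeasurableSpace Y) (μ : @Measure Y mY),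
    @StandardBorelSpace Y mY ∧ SigmaFinite μ ∧
    ∃ (π : Δ → (Lp ℝ p μ ≃ₗᵢ[ℝ] Lp ℝ p μ)) (b : Δ → Lp ℝ p μ),
      (∃ D : ℝ, ∀ g ∈ A, ∀ h ∈ A, ‖b (g * h) - b g - (π g) (b h)‖ ≤ D) ∧
      ∀ C : ℝ, 0 < C → {x ∈ A | ‖b x‖ ≤ C}.Finite


/-!
The subgroup `⟨Δ⟩` has finite index in `⟨Λ⟩`, and "every `L^p`-cocycle is bounded on a
subset" passes to finite-index subgroups by inducing cocycles.

Finite index: let `D ≤ Γ` consist of the lifts of `⟨Δ⟩` and let `S` be the closure of `π_H(D)`.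
Relative density of `Δ` and density of `π_H(D)` in `S` give `G × S ⊆ D * K` for a compact `K`.
As `Γ` is closed and `π_H(Γ)` is dense, this forces `Γ * K = G × H`, so `H` is covered by
countably many cosets of `S`. By Baire, `S` is open, hence of finite index since `H` is almost
connected; and `D` has finite index in `Γ ∩ (G × S)` because `Γ ∩ K` is finite.

Induction: a cocycle `(π, b)` on a finite-index subgroup `D ≤ L` induces a cocycle on `L` with
values in `ℓ^p(L ⧸ D; L^p(μ)) ≅ L^p(count × μ)`, whose component at the trivial coset is `b` on
`D`, so its norm dominates `‖b d‖`.
-/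

open Topology

theorem RelativelyDense.mono {G : Type*} [Group G] [TopologicalSpace G] {A B : Set G}
    (hA : RelativelyDense A) (hAB : A ⊆ B) : RelativelyDense B := by
  obtain ⟨K, hK, hAK⟩ := hA
  exact ⟨K, hK, eq_univ_of_univ_subset (hAK ▸ Set.mul_subset_mul_right hAB)⟩

namespace Subgroup

theorem isFiniteRelIndex_of_subset_mul {G : Type*} [Group G] {D L : Subgroup G} {F : Set G}
    (hF : F.Finite) (hL : (L : Set G) ⊆ D * F) : D.IsFiniteRelIndex L := by
  rw [isFiniteRelIndex_iff_finiteIndex, finiteIndex_iff_finite_quotient]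
  have hdec : ∀ x : L, ∃ f : F, ∃ d ∈ D, (x : G)⁻¹ = d * f := fun x => by
    obtain ⟨d, hd, f, hf, hdf⟩ := hL (inv_mem x.2)
    exact ⟨⟨f, hf⟩, d, hd, hdf.symm⟩
  choose φ d hd hφ using hdec
  have : Finite F := hF
  refine Finite.of_injective (fun q : L ⧸ D.subgroupOf L => φ q.out)
    fun q q' (hqq' : φ q.out = φ q'.out) => ?_
  rw [← q.out_eq', ← q'.out_eq', QuotientGroup.eq, mem_subgroupOf]
  have : ((q.out : L) : G)⁻¹ * q'.out = d q.out * (d q'.out)⁻¹ := by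
    rw [← inv_inv ((q'.out : L) : G), hφ, hφ, hqq']
    group
  rw [coe_mul, coe_inv, this]
  exact mul_mem (hd _) (inv_mem (hd _))

variable {H : Type*} [Group H] [TopologicalSpace H] [IsTopologicalGroup H]

theorem isOpen_of_iUnion_smul_eq_univ [BaireSpace H] (S : Subgroup H)
    (hS : IsClosed (S : Set H)) {ι : Type*} [Countable ι] (f : ι → H)
    (hcover : ⋃ i, f i • (S : Set H) = univ) : IsOpen (S : Set H) := by
  obtain ⟨i, hi⟩ := nonempty_interior_of_iUnion_of_closed (fun i => hS.smul (f i)) hcover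
  rw [interior_smul] at hi
  obtain ⟨x, hx⟩ := smul_set_nonempty.mp hi
  exact S.isOpen_of_mem_nhds (mem_interior_iff_mem_nhds.mp hx)

theorem finiteIndex_of_isOpen [CompactSpace (ConnectedComponents H)] (U : Subgroup H)
    (hU : IsOpen (U : Set H)) : U.FiniteIndex := by
  have := QuotientGroup.discreteTopology hU
  have hlift := (QuotientGroup.continuous_mk (N := U)).connectedComponentsLift_continuous
  have : CompactSpace (H ⧸ U) := Function.Surjective.compactSpace hlift fun q => by
    obtain ⟨h, rfl⟩ := QuotientGroup.mk_surjective q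
    exact ⟨h, rfl⟩
  have : Finite (H ⧸ U) := finite_of_compact_of_discrete
  exact finiteIndex_of_finite_quotient

end Subgroup

section CutAndProject

variable {G H : Type*} [Group G] [TopologicalSpace G]
  [Group H] [TopologicalSpace H] [IsTopologicalGroup H]

theorem mul_eq_univ_of_dense_snd [IsTopologicalGroup G] (Γ : Subgroup (G × H))
    (hΓ : IsClosed (Γ : Set (G × H))) (hdense : Dense (Prod.snd '' (Γ : Set (G × H))))
    {K : Set (G × H)} (hK : IsCompact K) (hcover : univ ×ˢ {1} ⊆ (Γ : Set (G × H)) * K) :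
    (Γ : Set (G × H)) * K = univ := by
  have hsub : univ ×ˢ (Prod.snd '' (Γ : Set (G × H))) ⊆ (Γ : Set (G × H)) * K := by
    rintro ⟨g, _⟩ ⟨-, γ, hγ, rfl⟩
    obtain ⟨γ', hγ', k, hk, hγk⟩ := hcover (mk_mem_prod (mem_univ (γ.1⁻¹ * g)) rfl)
    refine ⟨γ * γ', mul_mem hγ hγ', k, hk, ?_⟩
    change γ * γ' * k = _
    rw [mul_assoc, show γ' * k = _ from hγk]
    ext <;> simp
  refine univ_subset_iff.mp ?_
  calc univ = closure (univ ×ˢ (Prod.snd '' (Γ : Set (G × H)))) := by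
        rw [closure_prod_eq, hdense.closure_eq, closure_univ, univ_prod_univ]
    _ ⊆ closure ((Γ : Set (G × H)) * K) := closure_mono hsub
    _ = (Γ : Set (G × H)) * K := (hΓ.mul_right_of_isCompact hK).closure_eq

theorem exists_isCompact_subset_mul_of_relativelyDense_modelSet [LocallyCompactSpace H]
    (D : Subgroup (G × H)) {W : Set H} (hW : IsCompact W) (hD : RelativelyDense (modelSet D W)) :
    ∃ K : Set (G × H), IsCompact K ∧
      K ⊆ univ ×ˢ ((D.map (MonoidHom.snd G H)).topologicalClosure : Set H) ∧
      univ ×ˢ ((D.map (MonoidHom.snd G H)).topologicalClosure : Set H) ⊆ (D : Set (G × H)) * K := by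
  set S := (D.map (MonoidHom.snd G H)).topologicalClosure
  have hS : ∀ d ∈ D, d.2 ∈ S := fun d hd =>
    Subgroup.le_topologicalClosure _ (Subgroup.mem_map_of_mem _ hd)
  obtain ⟨K, hK, hDK⟩ := hD
  obtain ⟨V, hV, hV1⟩ := exists_compact_mem_nhds (1 : H)
  have hSc : IsClosed (S : Set H) := Subgroup.isClosed_topologicalClosure _
  refine ⟨K ×ˢ ((W⁻¹ * V) ∩ S), hK.prod ((hW.inv.mul hV).inter_right hSc),
    prod_mono (subset_univ K) inter_subset_right, ?_⟩
  rintro ⟨g, h⟩ ⟨-, hh⟩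
  have hnhds : {x : H | x⁻¹ * h ∈ V} ∈ 𝓝 h :=
    ((continuous_inv.mul continuous_const).continuousAt (x := h)).preimage_mem_nhds
      (by simpa using hV1)
  obtain ⟨_, hv, d₁, hd₁, rfl⟩ := mem_closure_iff_nhds.mp hh _ hnhds
  obtain ⟨_, ⟨d₂, ⟨hd₂, -, hd₂W⟩, rfl⟩, k, hk, hd₂k⟩ :=
    (hDK ▸ mem_univ (d₁.1⁻¹ * g) : d₁.1⁻¹ * g ∈ modelSet D W * K)
  refine ⟨d₁ * d₂, mul_mem hd₁ hd₂, (d₁ * d₂)⁻¹ * (g, h), ⟨?_, ?_, ?_⟩, mul_inv_cancel_left _ _⟩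
  · simpa [mul_assoc, ← hd₂k] using hk
  · refine ⟨d₂.2⁻¹, inv_mem_inv.mpr hd₂W, d₁.2⁻¹ * h, hv, ?_⟩
    simp [mul_assoc]
  · simpa [mul_assoc] using mul_mem (inv_mem (hS _ hd₂)) (mul_mem (inv_mem (hS _ hd₁)) hh)

end CutAndProject

theorem isFiniteRelIndex_closure_map_fst {G H : Type*} [Group G] [TopologicalSpace G]
    [IsTopologicalGroup G] [T2Space G] [SecondCountableTopology G]
    [Group H] [TopologicalSpace H] [IsTopologicalGroup H] [T2Space H] [LocallyCompactSpace H]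
    [SecondCountableTopology H] [CompactSpace (ConnectedComponents H)]
    (Γ : Subgroup (G × H)) [DiscreteTopology Γ] (hdense : Dense (Prod.snd '' (Γ : Set (G × H))))
    {W : Set H} (hW : IsCompact W) {Δ : Set G} (hΔ : Δ ⊆ modelSet Γ W)
    (hrd : RelativelyDense Δ) :
    (Subgroup.closure Δ).IsFiniteRelIndex (Γ.map (MonoidHom.fst G H)) := by
  set D := (Subgroup.closure Δ).comap (MonoidHom.fst G H) ⊓ Γ
  have hDΓ : D ≤ Γ := inf_le_right
  have hΔD : Δ ⊆ modelSet D W := by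
    intro δ hδ
    obtain ⟨γ, ⟨hγ, hγW⟩, rfl⟩ := hΔ hδ
    exact ⟨γ, ⟨⟨Subgroup.subset_closure hδ, hγ⟩, hγW⟩, rfl⟩
  obtain ⟨K, hK, hKS, hSK⟩ :=
    exists_isCompact_subset_mul_of_relativelyDense_modelSet D hW (hrd.mono hΔD)
  set S := (D.map (MonoidHom.snd G H)).topologicalClosure
  have hΓ : IsClosed (Γ : Set (G × H)) := Subgroup.isClosed_of_discrete
  have hΓK : (Γ : Set (G × H)) * K = univ := by
    refine mul_eq_univ_of_dense_snd Γ hΓ hdense hK ?_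
    calc univ ×ˢ {1} ⊆ univ ×ˢ (S : Set H) := prod_mono subset_rfl (by simp [S.one_mem])
      _ ⊆ (D : Set (G × H)) * K := hSK
      _ ⊆ (Γ : Set (G × H)) * K := mul_subset_mul_right hDΓ
  -- Baire: `H` is covered by the countably many translates `γ.2 • S`, `γ ∈ Γ`.
  have hSopen : IsOpen (S : Set H) := by
    have : Countable Γ := TopologicalSpace.separableSpace_iff_countable.mp inferInstance
    refine S.isOpen_of_iUnion_smul_eq_univ (Subgroup.isClosed_topologicalClosure _)
      (fun γ : Γ => (γ : G × H).2) (eq_univ_of_forall fun h => ?_)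
    obtain ⟨γ, hγ, k, hk, hγk⟩ := hΓK.symm ▸ mem_univ ((1 : G), h)
    exact mem_iUnion.mpr ⟨⟨γ, hγ⟩, k.2, (hKS hk).2, by simpa using congrArg Prod.snd hγk⟩
  have : S.FiniteIndex := S.finiteIndex_of_isOpen hSopen
  have hfin : ((Γ : Set (G × H)) ∩ K).Finite := (hK.inter_left hΓ).finite
    ((isDiscrete_iff_discreteTopology.mpr ‹_›).mono inter_subset_left)
  have hDS : D.IsFiniteRelIndex (S.comap (MonoidHom.snd G H) ⊓ Γ) := by
    refine Subgroup.isFiniteRelIndex_of_subset_mul hfin ?_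
    rintro x ⟨hxS, hxΓ⟩
    obtain ⟨d, hd, k, hk, rfl⟩ := hSK ⟨mem_univ _, hxS⟩
    exact ⟨d, hd, k, ⟨by simpa using mul_mem (inv_mem (hDΓ hd)) hxΓ, hk⟩, rfl⟩
  have hSΓ : (S.comap (MonoidHom.snd G H) ⊓ Γ).relIndex Γ ≠ 0 := by
    rw [Subgroup.inf_relIndex_right, Subgroup.relIndex_comap]
    exact (Subgroup.isFiniteRelIndex_of_finiteIndex (H := S)).relIndex_ne_zero
  rw [Subgroup.isFiniteRelIndex_iff_relIndex_ne_zero, ← Subgroup.relIndex_comap,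
    ← Subgroup.inf_relIndex_right]
  exact Subgroup.relIndex_ne_zero_trans hDS.relIndex_ne_zero hSΓ

section Cocycle

variable {Γ : Type*} [Group Γ] {E : Type*} [NormedAddCommGroup E] [NormedSpace ℝ E]

def IsCocycle (π : Γ →* (E ≃ₗᵢ[ℝ] E)) (b : Γ → E) : Prop :=
  ∀ g h, b (g * h) = b g + π g (b h)

theorem IsCocycle.conj {F : Type*} [NormedAddCommGroup F] [NormedSpace ℝ F]
    {π : Γ →* (E ≃ₗᵢ[ℝ] E)} {b : Γ → E} (hb : IsCocycle π b) (Ψ : E ≃ₗᵢ[ℝ] F) :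
    IsCocycle (MonoidHom.mk' (fun g => (Ψ.symm.trans (π g)).trans Ψ) fun g h => by
      ext v; simp) (Ψ ∘ b) := fun g h => by
  simp [hb g h]

end Cocycle

namespace Subgroup

variable {L : Type*} [Group L] (D : Subgroup L)

noncomputable def quotientSection (x : L ⧸ D) : L :=
  open Classical in if x = ((1 : L) : L ⧸ D) then 1 else x.out

@[simp]
theorem mk_quotientSection (x : L ⧸ D) : (D.quotientSection x : L ⧸ D) = x := by
  unfold quotientSection
  split_ifs with hx
  · exact hx.symm
  · exact x.out_eq'

@[simp]
theorem quotientSection_one : D.quotientSection ((1 : L) : L ⧸ D) = 1 := by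
  simp [quotientSection]

theorem quotientSection_inv_mul_mem (g : L) (x : L ⧸ D) :
    (D.quotientSection x)⁻¹ * (g * D.quotientSection (g⁻¹ • x)) ∈ D := by
  rw [← QuotientGroup.eq, ← smul_eq_mul, ← MulAction.Quotient.smul_coe, mk_quotientSection,
    mk_quotientSection, smul_inv_smul]

/-- The cocycle `(g, x) ↦ s(x)⁻¹ g s(g⁻¹ x)` of `L ↷ L ⧸ D` with values in `D`, where
`s = quotientSection`. -/
noncomputable def quotientCocycle (g : L) (x : L ⧸ D) : D :=
  ⟨_, D.quotientSection_inv_mul_mem g x⟩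

theorem quotientCocycle_mul (g k : L) (x : L ⧸ D) :
    D.quotientCocycle (g * k) x = D.quotientCocycle g x * D.quotientCocycle k (g⁻¹ • x) := by
  ext
  simp only [quotientCocycle, Subgroup.coe_mul, mul_inv_rev, mul_smul]
  group

theorem quotientCocycle_one_of_mem (d : D) :
    D.quotientCocycle d ((1 : L) : L ⧸ D) = d := by
  have hd : (d : L)⁻¹ • ((1 : L) : L ⧸ D) = ((1 : L) : L ⧸ D) := by
    rw [MulAction.Quotient.smul_coe, smul_eq_mul, mul_one, QuotientGroup.eq, inv_inv, mul_one]
    exact d.2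
  ext
  simp [quotientCocycle, hd]

end Subgroup

section InducedCocycle

variable {L : Type*} [Group L] {E : Type*} [NormedAddCommGroup E]
  (p : ℝ≥0∞) [Fact (1 ≤ p)] (D : Subgroup L) [Fintype (L ⧸ D)]

noncomputable def inducedCocycle (b : D → E) (g : L) : PiLp p (fun _ : L ⧸ D => E) :=
  WithLp.toLp p fun x => b (D.quotientCocycle g x)

theorem norm_le_norm_inducedCocycle (b : D → E) (d : D) :
    ‖b d‖ ≤ ‖inducedCocycle p D b d‖ := by
  simpa [inducedCocycle, Subgroup.quotientCocycle_one_of_mem] using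
    PiLp.norm_apply_le (inducedCocycle p D b d) ((1 : L) : L ⧸ D)

variable [NormedSpace ℝ E]

noncomputable def inducedRep (π : D →* (E ≃ₗᵢ[ℝ] E)) :
    L →* (PiLp p (fun _ : L ⧸ D => E) ≃ₗᵢ[ℝ] PiLp p (fun _ : L ⧸ D => E)) :=
  MonoidHom.mk' (fun g => (LinearIsometryEquiv.piLpCongrLeft p ℝ E (MulAction.toPerm g)).trans
    (LinearIsometryEquiv.piLpCongrRight p fun x => π (D.quotientCocycle g x))) fun g k => by
    ext v x
    simp [LinearIsometryEquiv.piLpCongrLeft_apply, LinearIsometryEquiv.piLpCongrRight_apply,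
      Subgroup.quotientCocycle_mul, mul_smul]

theorem inducedRep_apply (π : D →* (E ≃ₗᵢ[ℝ] E)) (g : L) (v : PiLp p (fun _ : L ⧸ D => E))
    (x : L ⧸ D) : inducedRep p D π g v x = π (D.quotientCocycle g x) (v (g⁻¹ • x)) :=
  rfl

theorem IsCocycle.induced {π : D →* (E ≃ₗᵢ[ℝ] E)} {b : D → E} (hb : IsCocycle π b) :
    IsCocycle (inducedRep p D π) (inducedCocycle p D b) := fun g k => by
  ext x
  simp [inducedCocycle, inducedRep_apply, Subgroup.quotientCocycle_mul, hb _ _]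

end InducedCocycle

namespace MeasureTheory

section CountProd

variable {X Y : Type*} [MeasurableSpace X] [MeasurableSingletonClass X]
  [MeasurableSpace Y] {μ : Measure Y} [SFinite μ]

theorem count_prod_eq_sum_map :
    (Measure.count : Measure X).prod μ = Measure.sum fun x => μ.map (Prod.mk x) := by
  ext s hs
  rw [Measure.prod_apply hs, lintegral_count, Measure.sum_apply _ hs]
  simp [Measure.map_apply measurable_prodMk_left hs]

theorem ae_count_prod_iff [Countable X] {P : X × Y → Prop} :
    (∀ᵐ z ∂(Measure.count : Measure X).prod μ, P z) ↔ ∀ x, ∀ᵐ y ∂μ, P (x, y) := by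
  simp [count_prod_eq_sum_map, (measurableEmbedding_prodMk_left _).ae_map_iff]

theorem lintegral_count_prod (f : X × Y → ℝ≥0∞) :
    ∫⁻ z, f z ∂(Measure.count : Measure X).prod μ = ∑' x, ∫⁻ y, f (x, y) ∂μ := by
  simp [count_prod_eq_sum_map, lintegral_sum_measure,
    (measurableEmbedding_prodMk_left _).lintegral_map]

theorem aestronglyMeasurable_count_prod [Countable X] {f : X → Y → ℝ}
    (hf : ∀ x, AEStronglyMeasurable (f x) μ) :
    AEStronglyMeasurable (fun z : X × Y => f z.1 z.2) ((Measure.count : Measure X).prod μ) :=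
  ⟨fun z => (hf z.1).mk _ z.2,
    (measurable_from_prod_countable_right fun x => (hf x).stronglyMeasurable_mk.measurable)
      |>.stronglyMeasurable,
    ae_count_prod_iff.mpr fun x => (hf x).ae_eq_mk⟩

theorem MemLp.comp_prodMk {p : ℝ≥0∞} {f : X × Y → ℝ}
    (hf : MemLp f p ((Measure.count : Measure X).prod μ)) (x : X) :
    MemLp (fun y => f (x, y)) p μ := by
  rw [count_prod_eq_sum_map] at hf
  exact (measurableEmbedding_prodMk_left x).memLp_map_measure_iff.mp
    (hf.mono_measure (Measure.le_sum _ x))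

end CountProd

section PiLpEquiv

variable {X Y : Type*} [Fintype X] [MeasurableSpace X] [MeasurableSingletonClass X]
  [MeasurableSpace Y] {μ : Measure Y} [SFinite μ] {p : ℝ≥0∞} [Fact (1 ≤ p)]

theorem eLpNorm_uncurry_piLp (hp : p ≠ ⊤) (u : PiLp p fun _ : X => Lp ℝ p μ) :
    eLpNorm (fun z : X × Y => u z.1 z.2) p ((Measure.count : Measure X).prod μ) =
      (∑ x, eLpNorm (u x) p μ ^ p.toReal) ^ (1 / p.toReal) := by
  have hp0 : p ≠ 0 := (zero_lt_one.trans_le Fact.out).ne'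
  have hpr : 0 < p.toReal := ENNReal.toReal_pos hp0 hp
  simp_rw [eLpNorm_eq_lintegral_rpow_enorm_toReal hp0 hp, lintegral_count_prod, tsum_fintype,
    ← ENNReal.rpow_mul, one_div_mul_cancel hpr.ne', ENNReal.rpow_one]

theorem memLp_uncurry_piLp (hp : p ≠ ⊤) (u : PiLp p fun _ : X => Lp ℝ p μ) :
    MemLp (fun z : X × Y => u z.1 z.2) p ((Measure.count : Measure X).prod μ) := by
  refine ⟨aestronglyMeasurable_count_prod fun x => Lp.aestronglyMeasurable (u x), ?_⟩
  rw [eLpNorm_uncurry_piLp hp]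
  refine ENNReal.rpow_lt_top_of_nonneg (by positivity) (ENNReal.sum_ne_top.mpr fun x _ => ?_)
  exact ENNReal.rpow_ne_top_of_nonneg ENNReal.toReal_nonneg (Lp.eLpNorm_ne_top (u x))

variable (μ) in
noncomputable def piLpToLpCountProd (hp : p ≠ ⊤) :
    (PiLp p fun _ : X => Lp ℝ p μ) →ₗᵢ[ℝ] Lp ℝ p ((Measure.count : Measure X).prod μ) where
  toFun u := (memLp_uncurry_piLp hp u).toLp _
  map_add' u v := by
    rw [← MemLp.toLp_add, MemLp.toLp_eq_toLp_iff]
    refine ae_count_prod_iff.mpr fun x => ?_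
    filter_upwards [Lp.coeFn_add (u x) (v x)] with y hy
    simpa using hy
  map_smul' c u := by
    rw [RingHom.id_apply, ← MemLp.toLp_const_smul, MemLp.toLp_eq_toLp_iff]
    refine ae_count_prod_iff.mpr fun x => ?_
    filter_upwards [Lp.coeFn_smul c (u x)] with y hy
    simpa using hy
  norm_map' u := by
    have hp0 : p ≠ 0 := (zero_lt_one.trans_le Fact.out).ne'
    have hpr : 0 < p.toReal := ENNReal.toReal_pos hp0 hp
    change ‖(memLp_uncurry_piLp hp u).toLp _‖ = ‖u‖
    rw [Lp.norm_toLp, eLpNorm_uncurry_piLp hp, PiLp.norm_eq_sum hpr, ← ENNReal.toReal_rpow,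
      ENNReal.toReal_sum fun x _ => ENNReal.rpow_ne_top_of_nonneg hpr.le (Lp.eLpNorm_ne_top _)]
    simp_rw [← ENNReal.toReal_rpow, ← Lp.norm_def]

theorem piLpToLpCountProd_surjective (hp : p ≠ ⊤) :
    Function.Surjective (piLpToLpCountProd (X := X) μ hp) := fun f => by
  refine ⟨WithLp.toLp p fun x => ((Lp.memLp f).comp_prodMk x).toLp _, Lp.ext ?_⟩
  filter_upwards [MemLp.coeFn_toLp (memLp_uncurry_piLp hp _),
    (ae_count_prod_iff (P := fun z => ((Lp.memLp f).comp_prodMk z.1).toLp _ z.2 = f z)).mpr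
      fun x => MemLp.coeFn_toLp ((Lp.memLp f).comp_prodMk x)] with z h1 h2
  exact h1.trans h2

variable (X μ) in
noncomputable def piLpEquivLpCountProd (hp : p ≠ ⊤) :
    (PiLp p fun _ : X => Lp ℝ p μ) ≃ₗᵢ[ℝ] Lp ℝ p ((Measure.count : Measure X).prod μ) :=
  LinearIsometryEquiv.ofSurjective _ (piLpToLpCountProd_surjective hp)

end PiLpEquiv

end MeasureTheory

namespace BddLpCocyclesOn

variable {p : ℝ≥0∞} {hp : 1 ≤ p}

theorem of_mulEquiv {Γ Γ' : Type*} [Group Γ] [Group Γ'] {A : Set Γ} {B : Set Γ'}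
    (h : BddLpCocyclesOn p hp Γ A) (e : Γ ≃* Γ') (hB : ∀ x ∈ B, e.symm x ∈ A) :
    BddLpCocyclesOn p hp Γ' B := by
  intro Y _ _ μ _ π b hb
  obtain ⟨C, hC⟩ := h Y μ (π.comp e.toMonoidHom) (b ∘ e) fun g k => by simp [hb]
  exact ⟨C, fun x hx => by simpa using hC _ (hB x hx)⟩

theorem finiteIndex_subgroup (hp_top : p ≠ ⊤) {L : Type} [Group L] {A : Set L}
    (h : BddLpCocyclesOn p hp L A) (D : Subgroup L) [D.FiniteIndex] :
    BddLpCocyclesOn p hp D {x | (x : L) ∈ A} := by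
  have : Fact (1 ≤ p) := ⟨hp⟩
  intro Y _ _ μ _ π b hb
  let : Fintype (L ⧸ D) := Fintype.ofFinite _
  let : MeasurableSpace (L ⧸ D) := ⊤
  have : DiscreteMeasurableSpace (L ⧸ D) := ⟨fun _ => trivial⟩
  let Ψ := MeasureTheory.piLpEquivLpCountProd (L ⧸ D) μ hp_top
  have hcoc := (IsCocycle.induced p D hb).conj Ψ
  obtain ⟨C, hC⟩ := h ((L ⧸ D) × Y) _ _ _ hcoc
  exact ⟨C, fun d hd => (norm_le_norm_inducedCocycle p D b d).trans (by simpa [Ψ] using hC d hd)⟩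

end BddLpCocyclesOn

theorem meyer_FLp_of_modelSet_FLp_general
    (p : ℝ≥0∞) (hp1 : 1 < p) (hp2 : p < ⊤)
    (G : Type) [Group G] [TopologicalSpace G] [IsTopologicalGroup G] [T2Space G]
    [SecondCountableTopology G]
    (H : Type) [Group H] [TopologicalSpace H] [IsTopologicalGroup H] [T2Space H]
    [LocallyCompactSpace H] [SecondCountableTopology H] [MeasurableSpace H]
    (hH : CompactSpace (ConnectedComponents H))
    (Γ : Subgroup (G × H)) (hCP : IsCutAndProject Γ)
    (W : Set H) (hW : IsRegularWindow H Γ W)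
    (Δ : Set G) (hΔsub : Δ ⊆ modelSet Γ W)
    (hΔrd : RelativelyDense Δ)
    (h : BddLpCocyclesOn p hp1.le ↥(Subgroup.closure (modelSet Γ W))
      {x : ↥(Subgroup.closure (modelSet Γ W)) | (x : G) ∈ modelSet Γ W}) :
    BddLpCocyclesOn p hp1.le ↥(Subgroup.closure Δ)
      {x : ↥(Subgroup.closure Δ) | (x : G) ∈ Δ} := by
  have : DiscreteTopology Γ := hCP.lattice.1
  have hΛ : Subgroup.closure (modelSet Γ W) ≤ Γ.map (MonoidHom.fst G H) :=
    (Subgroup.closure_le _).mpr (image_mono inter_subset_left)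
  have := isFiniteRelIndex_closure_map_fst Γ hCP.dense_proj hW.1 hΔsub hΔrd
  have := Subgroup.isFiniteRelIndex_of_le_right (H := Subgroup.closure Δ) hΛ
  exact (h.finiteIndex_subgroup hp2.ne _).of_mulEquiv
    (Subgroup.subgroupOfEquivOfLe (Subgroup.closure_mono hΔsub)) fun x hx => hΔsub hx

/-- For a regular symmetric uniform model set `Λ` of almost connected
type and a symmetric relatively dense subset `Δ ⊆ Λ` containing `1`: if every
`L^p`-cocycle on `Λ^∞` is bounded on `Λ`, then every `L^p`-cocycle on `Δ^∞` is bounded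
on `Δ`. -/
theorem meyer_FLp_of_modelSet_FLp
    (p : ℝ≥0∞) (hp1 : 1 < p) (hp2 : p < ⊤)
    (G : Type) [Group G] [TopologicalSpace G] [IsTopologicalGroup G] [T2Space G]
    [LocallyCompactSpace G] [SecondCountableTopology G]
    (H : Type) [Group H] [TopologicalSpace H] [IsTopologicalGroup H] [T2Space H]
    [LocallyCompactSpace H] [SecondCountableTopology H] [MeasurableSpace H] [BorelSpace H]
    (hH : CompactSpace (ConnectedComponents H))
    (Γ : Subgroup (G × H)) (hCP : IsCutAndProject Γ)
    (W : Set H) (hW : IsRegularWindow H Γ W)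
    (Δ : Set G) (hΔsub : Δ ⊆ modelSet Γ W) (hΔsym : Δ⁻¹ = Δ) (hΔ1 : (1 : G) ∈ Δ)
    (hΔrd : RelativelyDense Δ)
    (h : BddLpCocyclesOn p hp1.le ↥(Subgroup.closure (modelSet Γ W))
      {x : ↥(Subgroup.closure (modelSet Γ W)) | (x : G) ∈ modelSet Γ W}) :
    BddLpCocyclesOn p hp1.le ↥(Subgroup.closure Δ)
      {x : ↥(Subgroup.closure Δ) | (x : G) ∈ Δ} :=
  meyer_FLp_of_modelSet_FLp_general p hp1 hp2 G H hH Γ hCP W hW Δ hΔsub hΔrd h
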